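/- arXiv:1101.5259 — 2 statements merged into one kernel-verified Lean document; each statement's English description precedes it below -/
import Mathlib

section
/- Let U be an open subset of the unit sphere S³ ⊂ ℝ⁴, K ⊆ U a compact set, and v a smooth unit tangent vector field on U. Then the energy of v on K satisfies E_K(v) ≥ (3/2)·μ(K) + ∫_K σ₂(v) dμ. -/
open MeasureTheory Matrix
open scoped RealInnerProductSpace ENNReal

noncomputable section

/-- `ℝ⁴` with its Euclidean structure. -/
abbrev E4 : Type := EuclideanSpace ℝ (Fin 4)

/-- The unit sphere `S³ ⊆ ℝ⁴`. -/
def S3 : Set E4 := {x : E4 | ‖x‖ = 1}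

/-- The Riemannian volume on `S³`: the 3-dimensional Hausdorff measure on `ℝ⁴`. -/
def μS : Measure E4 := μH[3]

/-- The Hopf vector field `H(x₁,x₂,x₃,x₄) = (−x₂, x₁, −x₄, x₃)`. -/
def Hopf (x : E4) : E4 := (WithLp.equiv 2 (Fin 4 → ℝ)).symm ![-x 1, x 0, -x 3, x 2]

/-- The covariant derivative `∇_Y v = D_Y v − ⟨D_Y v, x⟩x` on the sphere, where `D` is the
(ambient) derivative of `v` at `x`. -/
def cov (x : E4) (D : E4 →L[ℝ] E4) (Y : E4) : E4 := D Y - ⟪D Y, x⟫ • x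

/-- `e : Fin 3 → E4` is an orthonormal basis of `T_x S³ = x^⊥` (any orthonormal family of
three vectors orthogonal to `x` spans `x^⊥`). -/
def TangentONB (x : E4) (e : Fin 3 → E4) : Prop :=
  Orthonormal ℝ e ∧ ∀ a, ⟪e a, x⟫ = 0

/-- The interior of `K` relative to the sphere `S³`. -/
def relInt (K : Set E4) : Set E4 :=
  {x ∈ K | ∃ V : Set E4, IsOpen V ∧ x ∈ V ∧ V ∩ S3 ⊆ K}

/-- The boundary `∂K` of `K` relative to the sphere `S³`. -/
def relFrontier (K : Set E4) : Set E4 := closure K \ relInt K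

/-- `K ⊆ S³` has smooth boundary: near each boundary point, `K` is a sublevel set of a smooth
function whose differential does not vanish on the tangent spaces of `S³` along the boundary. -/
def HasSmoothBoundary (K : Set E4) : Prop :=
  ∀ x ∈ relFrontier K, ∃ (V : Set E4) (f : E4 → ℝ), IsOpen V ∧ x ∈ V ∧
    ContDiffOn ℝ (⊤ : ℕ∞) f V ∧ (∀ y ∈ V ∩ S3, (y ∈ K ↔ f y ≤ 0)) ∧
    ∀ y ∈ V ∩ relFrontier K, ∃ Y : E4, ⟪Y, y⟫ = 0 ∧ fderiv ℝ f y Y ≠ 0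


open Filter Set
open scoped NNReal Topology

abbrev E3 : Type := EuclideanSpace ℝ (Fin 3)

/-- The projection onto the orthogonal complement of `y`, as a continuous linear map. -/
def Qc (y : E4) : E4 →L[ℝ] E4 := ContinuousLinearMap.id ℝ E4 - ((innerSL ℝ y).smulRight y)

lemma Qc_apply (y z : E4) : Qc y z = z - ⟪z, y⟫ • y := by
  simp only [Qc, ContinuousLinearMap.sub_apply, ContinuousLinearMap.id_apply,
    ContinuousLinearMap.smulRight_apply, innerSL_apply_apply]
  rw [real_inner_comm y z]

lemma cov_eq_Qc (y : E4) (D : E4 →L[ℝ] E4) (t : E4) : cov y D t = Qc y (D t) := by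
  rw [cov, Qc_apply]

lemma Qc_apply_orth (y z : E4) (h : ⟪z, y⟫ = 0) : Qc y z = z := by
  rw [Qc_apply, h]; simp

lemma Qc_apply_self (y : E4) (h : ‖y‖ = 1) : Qc y y = 0 := by
  rw [Qc_apply, real_inner_self_eq_norm_sq, h]; simp

lemma inner_Qc_self (y z : E4) (h : ‖y‖ = 1) : ⟪Qc y z, y⟫ = 0 := by
  rw [Qc_apply, inner_sub_left, real_inner_smul_left, real_inner_self_eq_norm_sq, h]; ring

/-- Two orthonormal vectors orthogonal to two given orthonormal vectors exist in `E4`. -/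
lemma exists_perp_pair (x w : E4) (hx : ‖x‖ = 1) (hw : ‖w‖ = 1) (hxw : ⟪x, w⟫ = 0) :
    ∃ e₁ e₂ : E4, ‖e₁‖ = 1 ∧ ‖e₂‖ = 1 ∧ ⟪e₁, e₂⟫ = 0 ∧ ⟪e₁, x⟫ = 0 ∧ ⟪e₂, x⟫ = 0 ∧
      ⟪e₁, w⟫ = 0 ∧ ⟪e₂, w⟫ = 0 := by
  classical
  set f : Fin 2 → E4 := ![x, w] with hf
  have hxx : ⟪x, x⟫ = 1 := by rw [real_inner_self_eq_norm_sq, hx]; norm_num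
  have hww : ⟪w, w⟫ = 1 := by rw [real_inner_self_eq_norm_sq, hw]; norm_num
  have hwx : ⟪w, x⟫ = 0 := by rw [real_inner_comm]; exact hxw
  have hon : Orthonormal ℝ f := by
    rw [orthonormal_iff_ite]
    intro i j
    fin_cases i <;> fin_cases j <;>
      simp only [hf, Matrix.cons_val_zero, Matrix.cons_val_one, Matrix.head_cons,
        Fin.mk_zero, Fin.mk_one] <;>
      simp only [Fin.isValue, if_true, hxx, hww, hxw, hwx, Fin.zero_eq_one_iff,
        Fin.one_eq_zero_iff, Nat.succ_ne_self, if_false] <;> norm_num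
  set W : Submodule ℝ E4 := (Submodule.span ℝ (Set.range f))ᗮ with hW
  have hdim : Module.finrank ℝ W = 2 := by
    have h1 : Module.finrank ℝ (Submodule.span ℝ (Set.range f)) = 2 := by
      rw [finrank_span_eq_card hon.linearIndependent]
      simp
    have h2 := Submodule.finrank_add_finrank_orthogonal (Submodule.span ℝ (Set.range f))
    rw [h1, finrank_euclideanSpace, Fintype.card_fin, ← hW] at h2
    omega
  set b := stdOrthonormalBasis ℝ W
  have hmem : ∀ i : Fin (Module.finrank ℝ W), (b i : E4) ∈ W := fun i => (b i).2
  have horth : ∀ u : E4, u ∈ W → ⟪u, x⟫ = 0 ∧ ⟪u, w⟫ = 0 := by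
    intro u hu
    rw [hW, Submodule.mem_orthogonal] at hu
    constructor
    · rw [real_inner_comm]
      exact hu x (Submodule.subset_span ⟨0, rfl⟩)
    · rw [real_inner_comm]
      exact hu w (Submodule.subset_span ⟨1, rfl⟩)
  refine ⟨b ⟨0, by omega⟩, b ⟨1, by omega⟩, ?_, ?_, ?_, ?_, ?_, ?_, ?_⟩
  · exact b.orthonormal.1 ⟨0, by omega⟩
  · exact b.orthonormal.1 ⟨1, by omega⟩
  · have := b.orthonormal.2 (i := ⟨0, by omega⟩) (j := ⟨1, by omega⟩) (by simp [Fin.ext_iff])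
    exact this
  · exact (horth _ (hmem _)).1
  · exact (horth _ (hmem _)).1
  · exact (horth _ (hmem _)).2
  · exact (horth _ (hmem _)).2

/-- The Hilbert–Schmidt norm squared is basis independent. -/
lemma sum_sq_norm_onb (A : E4 →L[ℝ] E4) (b c : OrthonormalBasis (Fin 4) ℝ E4) :
    ∑ i, ‖A (b i)‖ ^ 2 = ∑ i, ‖A (c i)‖ ^ 2 := by
  have key : ∀ f : OrthonormalBasis (Fin 4) ℝ E4,
      ∑ i, ‖A (f i)‖ ^ 2 = ∑ j, ‖(ContinuousLinearMap.adjoint A) (c j)‖ ^ 2 := by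
    intro f
    have h1 : ∀ i, ‖A (f i)‖ ^ 2 = ∑ j, ⟪A (f i), c j⟫ * ⟪c j, A (f i)⟫ := by
      intro i
      rw [OrthonormalBasis.sum_inner_mul_inner, real_inner_self_eq_norm_sq]
    have h2 : ∀ j, ‖(ContinuousLinearMap.adjoint A) (c j)‖ ^ 2 =
        ∑ i, ⟪(ContinuousLinearMap.adjoint A) (c j), f i⟫ *
          ⟪f i, (ContinuousLinearMap.adjoint A) (c j)⟫ := by
      intro j
      rw [OrthonormalBasis.sum_inner_mul_inner, real_inner_self_eq_norm_sq]
    simp only [h1, h2]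
    rw [Finset.sum_comm]
    congr 1
    ext j
    congr 1
    ext i
    have ha : ⟪(ContinuousLinearMap.adjoint A) (c j), f i⟫ = ⟪c j, A (f i)⟫ :=
      ContinuousLinearMap.adjoint_inner_left A (f i) (c j)
    have ha' : ⟪f i, (ContinuousLinearMap.adjoint A) (c j)⟫ = ⟪A (f i), c j⟫ := by
      rw [real_inner_comm, ha, real_inner_comm]
    rw [ha, ha']
    ring
  rw [key b, key c]

lemma onb_of_frame (y : E4) (hy : ‖y‖ = 1) (e : Fin 3 → E4) (he : TangentONB y e) :
    ∃ c : OrthonormalBasis (Fin 4) ℝ E4, c 0 = e 0 ∧ c 1 = e 1 ∧ c 2 = e 2 ∧ c 3 = y := by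
  classical
  set g : Fin 4 → E4 := ![e 0, e 1, e 2, y] with hg
  have hee : ∀ a b : Fin 3, ⟪e a, e b⟫ = if a = b then 1 else 0 :=
    orthonormal_iff_ite.mp he.1
  have hey : ∀ a, ⟪e a, y⟫ = 0 := he.2
  have hye : ∀ a, ⟪y, e a⟫ = 0 := fun a => by rw [real_inner_comm]; exact hey a
  have hyy : ⟪y, y⟫ = 1 := by rw [real_inner_self_eq_norm_sq, hy]; norm_num
  have E0 : ∀ (h : (0:ℕ) < 4), g ⟨0, h⟩ = e 0 := fun _ => rfl
  have E1 : ∀ (h : (1:ℕ) < 4), g ⟨1, h⟩ = e 1 := fun _ => rfl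
  have E2 : ∀ (h : (2:ℕ) < 4), g ⟨2, h⟩ = e 2 := fun _ => rfl
  have E3 : ∀ (h : (3:ℕ) < 4), g ⟨3, h⟩ = y := fun _ => rfl
  have hon : Orthonormal ℝ g := by
    rw [orthonormal_iff_ite]
    intro i j
    fin_cases i <;> fin_cases j <;>
      simp only [E0, E1, E2, E3, hee, hey, hye, hyy, Fin.mk.injEq] <;>
      norm_num [Fin.ext_iff]
  have hcard : Fintype.card (Fin 4) = Module.finrank ℝ E4 := by
    simp [finrank_euclideanSpace]
  have hsp : ⊤ ≤ Submodule.span ℝ (Set.range g) := by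
    have hb := (basisOfLinearIndependentOfCardEqFinrank hon.linearIndependent hcard).span_eq
    rw [coe_basisOfLinearIndependentOfCardEqFinrank] at hb
    exact hb.ge
  refine ⟨OrthonormalBasis.mk hon hsp, ?_, ?_, ?_, ?_⟩ <;>
    simp [OrthonormalBasis.coe_mk, hg]

lemma orthonormal_pair (e₁ e₂ : E4) (h1 : ‖e₁‖ = 1) (h2 : ‖e₂‖ = 1) (h12 : ⟪e₁, e₂⟫ = 0) :
    Orthonormal ℝ (![e₁, e₂] : Fin 2 → E4) := by
  have h11 : ⟪e₁, e₁⟫ = 1 := by rw [real_inner_self_eq_norm_sq, h1]; norm_num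
  have h22 : ⟪e₂, e₂⟫ = 1 := by rw [real_inner_self_eq_norm_sq, h2]; norm_num
  have h21 : ⟪e₂, e₁⟫ = 0 := by rw [real_inner_comm]; exact h12
  have E0 : ∀ (h : (0:ℕ) < 2), (![e₁, e₂] : Fin 2 → E4) ⟨0, h⟩ = e₁ := fun _ => rfl
  have E1 : ∀ (h : (1:ℕ) < 2), (![e₁, e₂] : Fin 2 → E4) ⟨1, h⟩ = e₂ := fun _ => rfl
  rw [orthonormal_iff_ite]
  intro i j
  fin_cases i <;> fin_cases j <;>
    simp only [E0, E1, h11, h22, h12, h21, Fin.mk.injEq] <;> norm_num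

lemma tangent_frame (x w e₁ e₂ : E4) (hx : ‖x‖ = 1) (hw : ‖w‖ = 1) (hwx : ⟪w, x⟫ = 0)
    (h1 : ‖e₁‖ = 1) (h2 : ‖e₂‖ = 1) (h12 : ⟪e₁, e₂⟫ = 0) (h1x : ⟪e₁, x⟫ = 0)
    (h2x : ⟪e₂, x⟫ = 0) (h1w : ⟪e₁, w⟫ = 0) (h2w : ⟪e₂, w⟫ = 0) :
    TangentONB x ![e₁, e₂, w] := by
  have h11 : ⟪e₁, e₁⟫ = 1 := by rw [real_inner_self_eq_norm_sq, h1]; norm_num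
  have h22 : ⟪e₂, e₂⟫ = 1 := by rw [real_inner_self_eq_norm_sq, h2]; norm_num
  have hww : ⟪w, w⟫ = 1 := by rw [real_inner_self_eq_norm_sq, hw]; norm_num
  have h21 : ⟪e₂, e₁⟫ = 0 := by rw [real_inner_comm]; exact h12
  have hw1 : ⟪w, e₁⟫ = 0 := by rw [real_inner_comm]; exact h1w
  have hw2 : ⟪w, e₂⟫ = 0 := by rw [real_inner_comm]; exact h2w
  have E0 : ∀ (h : (0:ℕ) < 3), (![e₁, e₂, w] : Fin 3 → E4) ⟨0, h⟩ = e₁ := fun _ => rfl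
  have E1 : ∀ (h : (1:ℕ) < 3), (![e₁, e₂, w] : Fin 3 → E4) ⟨1, h⟩ = e₂ := fun _ => rfl
  have E2 : ∀ (h : (2:ℕ) < 3), (![e₁, e₂, w] : Fin 3 → E4) ⟨2, h⟩ = w := fun _ => rfl
  constructor
  · rw [orthonormal_iff_ite]
    intro i j
    fin_cases i <;> fin_cases j <;>
      simp only [E0, E1, E2, h11, h22, hww, h12, h21, h1w, h2w, hw1, hw2, Fin.mk.injEq] <;>
      norm_num
  · intro a
    fin_cases a <;> simp only [E0, E1, E2] <;> assumption

/-- Pointwise key inequality: `2 σ₂ ≤ ‖∇v‖²` and `0 ≤ ‖∇v‖²`. -/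
lemma pointwise_core (x w : E4) (D : E4 →L[ℝ] E4) (hx : ‖x‖ = 1) (hw : ‖w‖ = 1)
    (hwx : ⟪w, x⟫ = 0) (Fx s2x : ℝ)
    (hFx : ∀ e : Fin 3 → E4, TangentONB x e → Fx = ∑ a : Fin 3, ‖cov x D (e a)‖ ^ 2)
    (hs2x : ∀ e₁ e₂ : E4, ‖e₁‖ = 1 → ‖e₂‖ = 1 → ⟪e₁, e₂⟫ = 0 → ⟪e₁, x⟫ = 0 → ⟪e₂, x⟫ = 0 →
      ⟪e₁, w⟫ = 0 → ⟪e₂, w⟫ = 0 →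
      s2x = ⟪cov x D e₁, e₁⟫ * ⟪cov x D e₂, e₂⟫ - ⟪cov x D e₁, e₂⟫ * ⟪cov x D e₂, e₁⟫) :
    2 * s2x ≤ Fx ∧ 0 ≤ Fx := by
  have hxw : ⟪x, w⟫ = 0 := by rw [real_inner_comm]; exact hwx
  obtain ⟨e₁, e₂, h1, h2, h12, h1x, h2x, h1w, h2w⟩ := exists_perp_pair x w hx hw hxw
  have hframe := tangent_frame x w e₁ e₂ hx hw hwx h1 h2 h12 h1x h2x h1w h2w
  have hFeq := hFx _ hframe
  have hs2eq := hs2x e₁ e₂ h1 h2 h12 h1x h2x h1w h2w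
  rw [Fin.sum_univ_three] at hFeq
  have Ev0 : (![e₁, e₂, w] : Fin 3 → E4) 0 = e₁ := rfl
  have Ev1 : (![e₁, e₂, w] : Fin 3 → E4) 1 = e₂ := rfl
  have Ev2 : (![e₁, e₂, w] : Fin 3 → E4) 2 = w := rfl
  rw [Ev0, Ev1, Ev2] at hFeq
  set c1 := cov x D e₁ with hc1
  set c2 := cov x D e₂ with hc2
  set c3 := cov x D w with hc3
  -- Bessel inequality for the orthonormal pair e₁, e₂
  have hop := orthonormal_pair e₁ e₂ h1 h2 h12
  have bessel : ∀ c : E4, ⟪c, e₁⟫ ^ 2 + ⟪c, e₂⟫ ^ 2 ≤ ‖c‖ ^ 2 := by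
    intro c
    have hb := hop.sum_inner_products_le (s := Finset.univ) c
    rw [Fin.sum_univ_two] at hb
    have B0 : (![e₁, e₂] : Fin 2 → E4) 0 = e₁ := rfl
    have B1 : (![e₁, e₂] : Fin 2 → E4) 1 = e₂ := rfl
    rw [B0, B1] at hb
    simp only [Real.norm_eq_abs, sq_abs] at hb
    have q1 : ⟪c, e₁⟫ = ⟪e₁, c⟫ := real_inner_comm _ _
    have q2 : ⟪c, e₂⟫ = ⟪e₂, c⟫ := real_inner_comm _ _
    rw [q1, q2]
    exact hb
  have b1 := bessel c1
  have b2 := bessel c2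
  have h3 : (0:ℝ) ≤ ‖c3‖ ^ 2 := by positivity
  constructor
  · rw [hs2eq, hFeq]
    nlinarith [sq_nonneg (⟪c1, e₁⟫ - ⟪c2, e₂⟫), sq_nonneg (⟪c1, e₂⟫ + ⟪c2, e₁⟫)]
  · rw [hFeq]; positivity

/-- Tangent vectors to the sphere lie in the tangent cone of any relatively open piece. -/
lemma mem_tangentCone_sphere (V : Set E4) (hV : IsOpen V) (x : E4) (hxV : x ∈ V)
    (hxS : ‖x‖ = 1) (e : E4) (he : ‖e‖ = 1) (hex : ⟪e, x⟫ = 0) :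
    e ∈ tangentConeAt ℝ (V ∩ S3) x := by
  set θ : ℕ → ℝ := fun n => (n + 1 : ℝ)⁻¹ with hθ
  have hθpos : ∀ n, 0 < θ n := fun n => by positivity
  have hθle : ∀ n, θ n ≤ 1 := by
    intro n
    rw [hθ]
    rw [inv_le_one_iff₀]
    right; push_cast; linarith
  have hθ0 : Tendsto θ atTop (𝓝 0) := by
    have := tendsto_one_div_add_atTop_nhds_zero_nat (𝕜 := ℝ)
    simpa [hθ, one_div] using this
  have hsinpos : ∀ n, 0 < Real.sin (θ n) :=
    fun n => Real.sin_pos_of_pos_of_lt_pi (hθpos n) (lt_of_le_of_lt (hθle n) (by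
      have := Real.pi_gt_three; linarith))
  set c : ℕ → ℝ := fun n => (Real.sin (θ n))⁻¹ with hc
  set d : ℕ → E4 := fun n => (Real.cos (θ n) - 1) • x + Real.sin (θ n) • e with hd
  have hxe : ⟪x, e⟫ = 0 := by rw [real_inner_comm]; exact hex
  -- x + d n is on the sphere
  have hnorm : ∀ n, ‖x + d n‖ = 1 := by
    intro n
    have hxd : x + d n = Real.cos (θ n) • x + Real.sin (θ n) • e := by
      rw [hd]; module
    have h2 : ‖x + d n‖ ^ 2 = 1 := by
      rw [hxd, norm_add_sq_real, norm_smul, norm_smul, real_inner_smul_left,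
        real_inner_smul_right, hxe]
      simp only [Real.norm_eq_abs, mul_zero, hxS, he]
      rw [mul_pow, mul_pow, sq_abs, sq_abs]
      simp [Real.sin_sq_add_cos_sq, Real.cos_sq_add_sin_sq]
    nlinarith [norm_nonneg (x + d n)]
  -- d n → 0
  have hd0 : Tendsto d atTop (𝓝 0) := by
    have hcos : Tendsto (fun n => Real.cos (θ n) - 1) atTop (𝓝 0) := by
      have h1 : Tendsto (fun n => Real.cos (θ n)) atTop (𝓝 1) := by
        have := (Real.continuous_cos.tendsto 0).comp hθ0
        simpa [Function.comp_def] using this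
      have h2 := h1.sub (tendsto_const_nhds (x := (1:ℝ)))
      simpa using h2
    have hsin : Tendsto (fun n => Real.sin (θ n)) atTop (𝓝 0) := by
      have := (Real.continuous_sin.tendsto 0).comp hθ0
      simpa [Function.comp_def] using this
    have := (hcos.smul_const x).add (hsin.smul_const e)
    simpa [hd] using this
  refine mem_tangentConeAt_of_seq atTop c d hd0 ?_ ?_
  · -- eventually x + d n ∈ V ∩ S3
    have hxdn : Tendsto (fun n => x + d n) atTop (𝓝 x) := by
      have := tendsto_const_nhds (x := x) (f := atTop (α := ℕ)) |>.add hd0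
      simpa using this
    have hev : ∀ᶠ n in atTop, x + d n ∈ V := hxdn.eventually (hV.mem_nhds hxV)
    filter_upwards [hev] with n hn
    exact ⟨hn, hnorm n⟩
  · -- c n • d n → e
    have key : ∀ n, c n • d n = ((Real.cos (θ n) - 1) / Real.sin (θ n)) • x + e := by
      intro n
      rw [hc, hd, smul_add, smul_smul, smul_smul, inv_mul_cancel₀ (hsinpos n).ne', one_smul,
        div_eq_inv_mul, mul_comm]
    have hratio : Tendsto (fun n => (Real.cos (θ n) - 1) / Real.sin (θ n)) atTop (𝓝 0) := by
      have hθne : ∀ n, θ n ≠ 0 := fun n => (hθpos n).ne'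
      have hθmem : Tendsto θ atTop (𝓝[≠] (0:ℝ)) :=
        tendsto_nhdsWithin_iff.mpr ⟨hθ0, Eventually.of_forall fun n => hθne n⟩
      have hcos' : Tendsto (fun n => (Real.cos (θ n) - 1) / θ n) atTop (𝓝 0) := by
        have hder : HasDerivAt Real.cos (-Real.sin 0) 0 := Real.hasDerivAt_cos 0
        rw [hasDerivAt_iff_tendsto_slope] at hder
        have := hder.comp hθmem
        simp only [Real.sin_zero, neg_zero] at this
        refine this.congr fun n => ?_
        simp [slope, Real.cos_zero, Function.comp, div_eq_inv_mul]
      have hsin' : Tendsto (fun n => Real.sin (θ n) / θ n) atTop (𝓝 1) := by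
        have hder : HasDerivAt Real.sin (Real.cos 0) 0 := Real.hasDerivAt_sin 0
        rw [hasDerivAt_iff_tendsto_slope] at hder
        have := hder.comp hθmem
        simp only [Real.cos_zero] at this
        refine this.congr fun n => ?_
        simp [slope, Real.sin_zero, Function.comp, div_eq_inv_mul]
      have hdiv := hcos'.div hsin' one_ne_zero
      simp only [zero_div] at hdiv
      refine hdiv.congr fun n => ?_
      rw [Pi.div_apply]
      field_simp
      rw [mul_comm (θ n), mul_div_mul_right _ _ (hθne n)]
    have : Tendsto (fun n => ((Real.cos (θ n) - 1) / Real.sin (θ n)) • x + e) atTop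
        (𝓝 ((0:ℝ) • x + e)) := (hratio.smul_const x).add tendsto_const_nhds
    simp only [zero_smul, zero_add] at this
    exact Tendsto.congr (fun n => (key n).symm) this

/-- Graph chart over the hyperplane orthogonal to coordinate `i`. -/
def chart (i : Fin 4) (ε : ℝ) (y : E3) : E4 :=
  (WithLp.equiv 2 (Fin 4 → ℝ)).symm (i.insertNth (ε * Real.sqrt (1 - ‖y‖ ^ 2)) (fun k => y k))

def Bset : Set E3 := {y : E3 | ‖y‖ ^ 2 ≤ 3 / 4}

lemma sqrt_lip {a b : ℝ} (ha : 1 / 4 ≤ a) (hb : 1 / 4 ≤ b) :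
    |Real.sqrt a - Real.sqrt b| ≤ |a - b| := by
  have ha0 : (0:ℝ) ≤ a := by linarith
  have hb0 : (0:ℝ) ≤ b := by linarith
  have hsa : Real.sqrt a ^ 2 = a := Real.sq_sqrt ha0
  have hsb : Real.sqrt b ^ 2 = b := Real.sq_sqrt hb0
  have hsa0 : (0:ℝ) ≤ Real.sqrt a := Real.sqrt_nonneg a
  have hsb0 : (0:ℝ) ≤ Real.sqrt b := Real.sqrt_nonneg b
  have hsa2 : 1 / 2 ≤ Real.sqrt a := by nlinarith
  have hsb2 : 1 / 2 ≤ Real.sqrt b := by nlinarith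
  rw [abs_sub_le_iff]
  constructor
  · rcases le_total (Real.sqrt b) (Real.sqrt a) with h | h
    · nlinarith [le_abs_self (a - b)]
    · nlinarith [abs_nonneg (a - b)]
  · rcases le_total (Real.sqrt a) (Real.sqrt b) with h | h
    · nlinarith [neg_abs_le (a - b), le_abs_self (a - b), abs_sub_comm a b, le_abs_self (b - a)]
    · nlinarith [abs_nonneg (a - b)]

lemma chart_lip (i : Fin 4) (ε : ℝ) (hε : ε ^ 2 = 1) :
    LipschitzOnWith 2 (chart i ε) Bset := by
  have s3 : Real.sqrt 3 ^ 2 = 3 := Real.sq_sqrt (by norm_num)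
  have s30 : (0:ℝ) ≤ Real.sqrt 3 := Real.sqrt_nonneg 3
  apply LipschitzOnWith.of_dist_le_mul
  intro y hy z hz
  have hy' : ‖y‖ ^ 2 ≤ 3 / 4 := hy
  have hz' : ‖z‖ ^ 2 ≤ 3 / 4 := hz
  have hy0 : (0:ℝ) ≤ ‖y‖ := norm_nonneg y
  have hz0 : (0:ℝ) ≤ ‖z‖ := norm_nonneg z
  -- the height difference
  have hsq : |Real.sqrt (1 - ‖y‖ ^ 2) - Real.sqrt (1 - ‖z‖ ^ 2)| ≤
      Real.sqrt 3 * dist y z := by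
    have h1 : |Real.sqrt (1 - ‖y‖ ^ 2) - Real.sqrt (1 - ‖z‖ ^ 2)| ≤
        |(1 - ‖y‖ ^ 2) - (1 - ‖z‖ ^ 2)| := sqrt_lip (by linarith) (by linarith)
    have h2 : |(1 - ‖y‖ ^ 2) - (1 - ‖z‖ ^ 2)| = |‖z‖ - ‖y‖| * (‖z‖ + ‖y‖) := by
      rw [← abs_of_nonneg (by linarith : (0:ℝ) ≤ ‖z‖ + ‖y‖), ← abs_mul]
      ring_nf
    have h3 : |‖z‖ - ‖y‖| ≤ ‖z - y‖ := abs_norm_sub_norm_le z y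
    have h4 : ‖z‖ + ‖y‖ ≤ Real.sqrt 3 := by
      have hsum : (0:ℝ) ≤ ‖z‖ + ‖y‖ + Real.sqrt 3 := by positivity
      nlinarith [sq_nonneg (‖z‖ - ‖y‖)]
    have h5 : ‖z - y‖ = dist y z := by rw [dist_comm, dist_eq_norm]
    calc |Real.sqrt (1 - ‖y‖ ^ 2) - Real.sqrt (1 - ‖z‖ ^ 2)|
        ≤ |‖z‖ - ‖y‖| * (‖z‖ + ‖y‖) := by rw [← h2]; exact h1
      _ ≤ ‖z - y‖ * Real.sqrt 3 := by
          apply mul_le_mul h3 h4 (by linarith) (norm_nonneg _)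
      _ = Real.sqrt 3 * dist y z := by rw [h5]; ring
  -- distance squared decomposition
  have hdecomp : dist (chart i ε y) (chart i ε z) ^ 2 =
      (ε * Real.sqrt (1 - ‖y‖ ^ 2) - ε * Real.sqrt (1 - ‖z‖ ^ 2)) ^ 2 + dist y z ^ 2 := by
    rw [EuclideanSpace.dist_eq]
    rw [Real.sq_sqrt (by positivity)]
    rw [Fin.sum_univ_succAbove (fun j => dist (chart i ε y j) (chart i ε z j) ^ 2) i]
    have hi : ∀ w : E3, chart i ε w i = ε * Real.sqrt (1 - ‖w‖ ^ 2) := by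
      intro w
      simp [chart, Fin.insertNth_apply_same]
    have hsa : ∀ (w : E3) (k : Fin 3), chart i ε w (i.succAbove k) = w k := by
      intro w k
      simp [chart, Fin.insertNth_apply_succAbove]
    rw [EuclideanSpace.dist_eq, Real.sq_sqrt (by positivity)]
    congr 1
    · rw [hi, hi, Real.dist_eq, sq_abs]
    · exact Finset.sum_congr rfl fun k _ => by rw [hsa, hsa, Real.dist_eq, sq_abs]
  have habs : |ε| = 1 := by
    have := sq_abs ε
    nlinarith [abs_nonneg ε]
  have hheight : (ε * Real.sqrt (1 - ‖y‖ ^ 2) - ε * Real.sqrt (1 - ‖z‖ ^ 2)) ^ 2 ≤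
      3 * dist y z ^ 2 := by
    have : ε * Real.sqrt (1 - ‖y‖ ^ 2) - ε * Real.sqrt (1 - ‖z‖ ^ 2) =
        ε * (Real.sqrt (1 - ‖y‖ ^ 2) - Real.sqrt (1 - ‖z‖ ^ 2)) := by ring
    rw [this, mul_pow, hε, one_mul, ← sq_abs]
    have hd0 : (0:ℝ) ≤ dist y z := dist_nonneg
    nlinarith [abs_nonneg (Real.sqrt (1 - ‖y‖ ^ 2) - Real.sqrt (1 - ‖z‖ ^ 2))]
  have hfinal : dist (chart i ε y) (chart i ε z) ^ 2 ≤ (2 * dist y z) ^ 2 := by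
    rw [hdecomp]; nlinarith [dist_nonneg (x := y) (y := z)]
  have hsum0 : (0:ℝ) ≤ dist (chart i ε y) (chart i ε z) + 2 * dist y z := by positivity
  have hgoal : dist (chart i ε y) (chart i ε z) ≤ 2 * dist y z := by
    nlinarith [dist_nonneg (x := y) (y := z)]
  push_cast
  exact hgoal

lemma sphere_cover :
    S3 ⊆ ⋃ i : Fin 4, (chart i 1 '' Bset ∪ chart i (-1) '' Bset) := by
  intro x hx
  have hx1 : ‖x‖ = 1 := hx
  have hsum : ∑ j : Fin 4, x j ^ 2 = 1 := by
    have := EuclideanSpace.norm_eq x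
    rw [hx1] at this
    have h2 : Real.sqrt (∑ j : Fin 4, ‖x j‖ ^ 2) = 1 := this.symm
    have h3 : ∑ j : Fin 4, ‖x j‖ ^ 2 = 1 := Real.sqrt_eq_one.mp h2
    simpa [Real.norm_eq_abs, sq_abs] using h3
  have hex : ∃ i : Fin 4, 1 / 4 ≤ x i ^ 2 := by
    by_contra hcon
    push_neg at hcon
    have : ∑ j : Fin 4, x j ^ 2 < ∑ _j : Fin 4, (1/4 : ℝ) :=
      Finset.sum_lt_sum_of_nonempty (by simp) fun j _ => hcon j
    simp [Finset.sum_const] at this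
    linarith
  obtain ⟨i, hi⟩ := hex
  set y : E3 := (WithLp.equiv 2 (Fin 3 → ℝ)).symm (fun k => x (i.succAbove k)) with hy
  have hyk : ∀ k, y k = x (i.succAbove k) := fun k => rfl
  have hynorm : ‖y‖ ^ 2 = 1 - x i ^ 2 := by
    have h1 : ‖y‖ ^ 2 = ∑ k : Fin 3, y k ^ 2 := by
      rw [EuclideanSpace.norm_eq, Real.sq_sqrt (by positivity)]
      exact Finset.sum_congr rfl fun k _ => by rw [Real.norm_eq_abs, sq_abs]
    rw [h1]
    have h2 := Fin.sum_univ_succAbove (fun j => x j ^ 2) i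
    rw [hsum] at h2
    have : ∑ k : Fin 3, y k ^ 2 = ∑ k : Fin 3, x (i.succAbove k) ^ 2 :=
      Finset.sum_congr rfl fun k _ => by rw [hyk]
    rw [this]
    linarith
  have hyB : y ∈ Bset := by
    have : ‖y‖ ^ 2 = 1 - x i ^ 2 := hynorm
    simp only [Bset, Set.mem_setOf_eq, this]
    linarith
  have hsq : Real.sqrt (1 - ‖y‖ ^ 2) = |x i| := by
    rw [hynorm]
    have : (1 : ℝ) - (1 - x i ^ 2) = x i ^ 2 := by ring
    rw [this, Real.sqrt_sq_eq_abs]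
  set ε : ℝ := if 0 ≤ x i then 1 else -1 with hε
  have hchart : chart i ε y = x := by
    have hval : ε * Real.sqrt (1 - ‖y‖ ^ 2) = x i := by
      rw [hsq, hε]
      rcases le_or_gt 0 (x i) with h | h
      · rw [if_pos h, one_mul, abs_of_nonneg h]
      · rw [if_neg (not_le.mpr h), neg_one_mul, abs_of_neg h, neg_neg]
    have hfun : i.insertNth (ε * Real.sqrt (1 - ‖y‖ ^ 2)) (fun k => y k) =
        (WithLp.equiv 2 (Fin 4 → ℝ)) x := by
      rw [hval]
      have : (fun k => y k) = i.removeNth ((WithLp.equiv 2 (Fin 4 → ℝ)) x) := by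
        funext k
        rw [hyk]
        rfl
      rw [this]
      have hxi : x i = ((WithLp.equiv 2 (Fin 4 → ℝ)) x) i := rfl
      rw [hxi]
      exact Fin.insertNth_self_removeNth i _
    rw [chart, hfun]
    exact (WithLp.equiv 2 (Fin 4 → ℝ)).symm_apply_apply x
  apply Set.mem_iUnion.mpr
  refine ⟨i, ?_⟩
  rcases le_or_gt 0 (x i) with h | h
  · left
    refine ⟨y, hyB, ?_⟩
    rw [← hchart, hε, if_pos h]
  · right
    refine ⟨y, hyB, ?_⟩
    rw [← hchart, hε, if_neg (not_le.mpr h)]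

lemma measure_Bset_lt_top : (μH[3] : Measure E3) Bset < ∞ := by
  have hfin : (Module.finrank ℝ E3 : ℝ) = 3 := by
    simp [finrank_euclideanSpace]
  haveI : (μH[(3:ℝ)] : Measure E3).IsAddHaarMeasure := by
    rw [← hfin]
    exact MeasureTheory.isAddHaarMeasure_hausdorffMeasure
  have hBsub : Bset ⊆ Metric.closedBall (0 : E3) 1 := by
    intro y hy
    have hy' : ‖y‖ ^ 2 ≤ 3/4 := hy
    have : ‖y‖ ≤ 1 := by nlinarith [norm_nonneg y]
    simpa [Metric.mem_closedBall, dist_zero_right] using this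
  calc (μH[3] : Measure E3) Bset ≤ (μH[3] : Measure E3) (Metric.closedBall 0 1) :=
        measure_mono hBsub
    _ < ∞ := (isCompact_closedBall 0 1).measure_lt_top

lemma sphere_measure_lt_top : μS S3 < ∞ := by
  have hle := measure_mono sphere_cover (μ := μS)
  have hone : ∀ (i : Fin 4) (ε : ℝ), ε ^ 2 = 1 → μS (chart i ε '' Bset) < ∞ := by
    intro i ε hε
    have h1 := (chart_lip i ε hε).hausdorffMeasure_image_le (by norm_num : (0:ℝ) ≤ 3)
    have h2 : ((2:ℝ≥0) : ℝ≥0∞) ^ (3:ℝ) * (μH[3] : Measure E3) Bset < ∞ := by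
      apply ENNReal.mul_lt_top _ measure_Bset_lt_top
      exact ENNReal.rpow_lt_top_of_nonneg (by norm_num) (by norm_num)
    exact lt_of_le_of_lt h1 h2
  calc μS S3 ≤ μS (⋃ i : Fin 4, (chart i 1 '' Bset ∪ chart i (-1) '' Bset)) := hle
    _ ≤ ∑' i : Fin 4, μS (chart i 1 '' Bset ∪ chart i (-1) '' Bset) := measure_iUnion_le _
    _ = ∑ i : Fin 4, μS (chart i 1 '' Bset ∪ chart i (-1) '' Bset) := tsum_fintype _
    _ < ∞ := by
        refine ENNReal.sum_lt_top.mpr fun i _ => ?_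
        refine lt_of_le_of_lt (measure_union_le _ _) ?_
        exact ENNReal.add_lt_top.mpr ⟨hone i 1 (by norm_num), hone i (-1) (by norm_num)⟩

lemma deriv_agree {v : E4 → E4} (O : Set E4) (hO : IsOpen O) (y : E4) (hyO : y ∈ O)
    (hyS : ‖y‖ = 1) (D₁ D₂ : E4 →L[ℝ] E4) (h₁ : HasFDerivWithinAt v D₁ (O ∩ S3) y)
    (h₂ : HasFDerivWithinAt v D₂ (O ∩ S3) y) (t : E4) (ht : ⟪t, y⟫ = 0) : D₁ t = D₂ t := by
  by_cases h0 : t = 0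
  · simp [h0]
  set e : E4 := ‖t‖⁻¹ • t with he_def
  have htn : ‖t‖ ≠ 0 := norm_ne_zero_iff.mpr h0
  have he : ‖e‖ = 1 := by
    rw [he_def, norm_smul, norm_inv, norm_norm, inv_mul_cancel₀ htn]
  have hey : ⟪e, y⟫ = 0 := by rw [he_def, real_inner_smul_left, ht, mul_zero]
  have hcone := mem_tangentCone_sphere O hO y hyO hyS e he hey
  have heq : D₁ e = D₂ e := h₁.unique_on h₂ hcone
  have ht_eq : t = ‖t‖ • e := by rw [he_def, smul_inv_smul₀ htn]
  rw [ht_eq, D₁.map_smul, D₂.map_smul, heq]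

set_option maxHeartbeats 1000000 in
lemma F_continuousOn (V K : Set E4) (hVo : IsOpen V) (hK : IsCompact K) (hKU : K ⊆ V ∩ S3)
    (v : E4 → E4) (Dv : E4 → E4 →L[ℝ] E4) (hv : ContDiffOn ℝ (⊤ : ℕ∞) v (V ∩ S3))
    (hDv : ∀ x ∈ V ∩ S3, HasFDerivWithinAt v (Dv x) (V ∩ S3) x)
    (hv1 : ∀ x ∈ V ∩ S3, ‖v x‖ = 1) (hv2 : ∀ x ∈ V ∩ S3, ⟪v x, x⟫ = 0)
    (F : E4 → ℝ)
    (hF : ∀ x ∈ K, ∀ e : Fin 3 → E4, TangentONB x e →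
      F x = ∑ a : Fin 3, ‖cov x (Dv x) (e a)‖ ^ 2) :
    ContinuousOn F K := by
  intro x₀ hx₀
  have hx₀U : x₀ ∈ V ∩ S3 := hKU hx₀
  -- extract a continuous family of derivatives near x₀
  have hcd1 : ContDiffWithinAt ℝ 1 v (V ∩ S3) x₀ := (hv x₀ hx₀U).of_le (by simp)
  obtain ⟨u, hu, p, hp⟩ := contDiffWithinAt_nat.mp hcd1
  rw [Set.insert_eq_of_mem hx₀U] at hu
  obtain ⟨W, hWo, hx₀W, hWsub⟩ := mem_nhdsWithin.mp hu
  set O : Set E4 := W ∩ V with hO_def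
  have hOo : IsOpen O := hWo.inter hVo
  have hx₀O : x₀ ∈ O := ⟨hx₀W, hx₀U.1⟩
  set f' : E4 → E4 →L[ℝ] E4 :=
    fun y => (continuousMultilinearCurryFin1 ℝ E4 E4) (p y 1) with hf'_def
  have hf'cont : ContinuousOn f' u :=
    (continuousMultilinearCurryFin1 ℝ E4 E4).continuous.comp_continuousOn (hp.cont 1 le_rfl)
  have hOSu : O ∩ S3 ⊆ u := by
    intro y hy
    exact hWsub ⟨hy.1.1, hy.1.2, hy.2⟩
  have hKOu : K ∩ O ⊆ u := by
    intro y hy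
    exact hOSu ⟨hy.2, (hKU hy.1).2⟩
  set b : OrthonormalBasis (Fin 4) ℝ E4 := EuclideanSpace.basisFun (Fin 4) ℝ with hb_def
  set G : E4 → ℝ := fun y => ∑ i : Fin 4, ‖Qc y (f' y (Qc y (b i)))‖ ^ 2 with hG_def
  -- F = G on K ∩ O
  have hFG : ∀ y ∈ K ∩ O, F y = G y := by
    rintro y ⟨hyK, hyO⟩
    have hyU : y ∈ V ∩ S3 := hKU hyK
    have hyS : ‖y‖ = 1 := hyU.2
    have hyu : y ∈ u := hKOu ⟨hyK, hyO⟩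
    -- agreement of Dv y and f' y on tangent vectors
    have hagree : ∀ t : E4, ⟪t, y⟫ = 0 → Dv y t = f' y t := by
      intro t ht
      have hsub1 : O ∩ S3 ⊆ V ∩ S3 := fun z hz => ⟨hz.1.2, hz.2⟩
      have h1 : HasFDerivWithinAt v (Dv y) (O ∩ S3) y := (hDv y hyU).mono hsub1
      have h2 : HasFDerivWithinAt v (f' y) (O ∩ S3) y :=
        (hp.hasFDerivWithinAt (by norm_num) hyu).mono hOSu
      exact deriv_agree O hOo y hyO hyS _ _ h1 h2 t ht
    -- the frame at y
    have hvy1 : ‖v y‖ = 1 := hv1 y hyU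
    have hvyx : ⟪v y, y⟫ = 0 := hv2 y hyU
    have hyvy : ⟪y, v y⟫ = 0 := by rw [real_inner_comm]; exact hvyx
    obtain ⟨e₁, e₂, h1, h2, h12, h1x, h2x, h1w, h2w⟩ := exists_perp_pair y (v y) hyS hvy1 hyvy
    have hframe := tangent_frame y (v y) e₁ e₂ hyS hvy1 hvyx h1 h2 h12 h1x h2x h1w h2w
    obtain ⟨c, hcv0, hcv1, hcv2, hcv3⟩ := onb_of_frame y hyS _ hframe
    set A : E4 →L[ℝ] E4 := (Qc y).comp ((Dv y).comp (Qc y)) with hA_def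
    have hAt : ∀ t : E4, A t = Qc y (Dv y (Qc y t)) := fun t => rfl
    -- F y = ∑ ‖A (c i)‖²
    have hstep1 : F y = ∑ i : Fin 4, ‖A (c i)‖ ^ 2 := by
      rw [hF y hyK _ hframe, Fin.sum_univ_four]
      have hc3 : A (c 3) = 0 := by
        rw [hAt, hcv3, Qc_apply_self y hyS, map_zero, map_zero]
      have hca : ∀ a : Fin 3, ∀ z : E4, (![e₁, e₂, v y] : Fin 3 → E4) a = z → ⟪z, y⟫ = 0 →
          ‖cov y (Dv y) ((![e₁, e₂, v y] : Fin 3 → E4) a)‖ = ‖A z‖ := by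
        intro a z haz hz
        rw [haz, hAt, Qc_apply_orth y z hz, cov_eq_Qc]
      rw [Fin.sum_univ_three]
      have hv0 : (![e₁, e₂, v y] : Fin 3 → E4) 0 = e₁ := rfl
      have hv1' : (![e₁, e₂, v y] : Fin 3 → E4) 1 = e₂ := rfl
      have hv2' : (![e₁, e₂, v y] : Fin 3 → E4) 2 = v y := rfl
      rw [hca 0 e₁ hv0 h1x, hca 1 e₂ hv1' h2x, hca 2 (v y) hv2' hvyx, hc3]
      rw [hcv0, hcv1, hcv2, hv0, hv1', hv2']
      simp
    -- ∑ ‖A (c i)‖² = ∑ ‖A (b i)‖² = G y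
    rw [hstep1, ← sum_sq_norm_onb A b c, hG_def]
    refine Finset.sum_congr rfl fun i _ => ?_
    rw [hAt, hagree (Qc y (b i)) (inner_Qc_self y (b i) hyS)]
  -- G is continuous on K ∩ O
  have hGcont : ContinuousOn G (K ∩ O) := by
    rw [hG_def]
    apply continuousOn_finset_sum
    intro i _
    have hQc_z : ∀ z : E4, Continuous fun y => Qc y z := by
      intro z
      simp only [Qc_apply]
      exact continuous_const.sub (by fun_prop)
    have hin : ContinuousOn (fun y => f' y (Qc y (b i))) (K ∩ O) :=
      (hf'cont.mono hKOu).clm_apply (hQc_z (b i)).continuousOn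
    have hout : ContinuousOn (fun y => Qc y (f' y (Qc y (b i)))) (K ∩ O) := by
      have hscal : ContinuousOn (fun y => (⟪f' y (Qc y (b i)), y⟫ : ℝ)) (K ∩ O) :=
        hin.inner continuousOn_id
      have hgg : ContinuousOn
          (fun y => f' y (Qc y (b i)) - ⟪f' y (Qc y (b i)), y⟫ • y) (K ∩ O) :=
        hin.sub (hscal.smul continuousOn_id)
      exact ContinuousOn.congr hgg fun y _ => Qc_apply y _
    exact (hout.norm.pow 2)
  -- conclude
  have hcw : ContinuousWithinAt F (K ∩ O) x₀ :=
    (hGcont.congr fun y hy => hFG y hy) x₀ ⟨hx₀, hx₀O⟩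
  exact (continuousWithinAt_inter (hOo.mem_nhds hx₀O)).mp hcw

/-- The energy of a smooth unit tangent vector field `v` on a compact set
`K` satisfies `E_K(v) ≥ (3/2)·μ(K) + ∫_K σ₂(v) dμ`. Here `F` is the energy integrand
`‖∇v‖²` and `s2` is `σ₂(v)`, both characterized through arbitrary orthonormal (tangent)
frames. -/
theorem energy_ge_sigma_two
    (U K : Set E4) (hU : ∃ V : Set E4, IsOpen V ∧ U = V ∩ S3)
    (hK : IsCompact K) (hKU : K ⊆ U)
    (v : E4 → E4) (Dv : E4 → E4 →L[ℝ] E4)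
    (hv : ContDiffOn ℝ (⊤ : ℕ∞) v U)
    (hDv : ∀ x ∈ U, HasFDerivWithinAt v (Dv x) U x)
    (hv1 : ∀ x ∈ U, ‖v x‖ = 1) (hv2 : ∀ x ∈ U, ⟪v x, x⟫ = 0)
    (F s2 : E4 → ℝ)
    (hF : ∀ x ∈ K, ∀ e : Fin 3 → E4, TangentONB x e →
      F x = ∑ a : Fin 3, ‖cov x (Dv x) (e a)‖ ^ 2)
    (hs2 : ∀ x ∈ K, ∀ e₁ e₂ : E4, ‖e₁‖ = 1 → ‖e₂‖ = 1 → ⟪e₁, e₂⟫ = 0 →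
      ⟪e₁, x⟫ = 0 → ⟪e₂, x⟫ = 0 → ⟪e₁, v x⟫ = 0 → ⟪e₂, v x⟫ = 0 →
      s2 x = ⟪cov x (Dv x) e₁, e₁⟫ * ⟪cov x (Dv x) e₂, e₂⟫ -
        ⟪cov x (Dv x) e₁, e₂⟫ * ⟪cov x (Dv x) e₂, e₁⟫) :
    (3 / 2) * (μS K).toReal + (1 / 2) * ∫ x in K, F x ∂μS ≥
      (3 / 2) * (μS K).toReal + ∫ x in K, s2 x ∂μS := by
  obtain ⟨V, hVo, hUV⟩ := hU
  subst hUV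
  have hKS3 : K ⊆ S3 := fun x hx => (hKU hx).2
  have hKmeas : MeasurableSet K := hK.isClosed.measurableSet
  have hμK : μS K < ⊤ := lt_of_le_of_lt (measure_mono hKS3) sphere_measure_lt_top
  haveI : IsFiniteMeasure (μS.restrict K) := ⟨by rwa [Measure.restrict_apply_univ]⟩
  have hpt : ∀ x ∈ K, 2 * s2 x ≤ F x ∧ 0 ≤ F x := by
    intro x hx
    have hx1 : ‖x‖ = 1 := hKS3 hx
    exact pointwise_core x (v x) (Dv x) hx1 (hv1 x (hKU hx)) (hv2 x (hKU hx)) (F x) (s2 x)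
      (hF x hx) (hs2 x hx)
  have hFcont := F_continuousOn V K hVo hK hKU v Dv hv hDv hv1 hv2 F hF
  obtain ⟨M, hM⟩ := hK.exists_bound_of_continuousOn hFcont
  have hFint : IntegrableOn F K μS := by
    refine ⟨hFcont.aestronglyMeasurable hKmeas, ?_⟩
    apply MeasureTheory.HasFiniteIntegral.of_bounded (C := M)
    exact (MeasureTheory.ae_restrict_iff' hKmeas).mpr (Filter.Eventually.of_forall hM)
  rw [ge_iff_le, add_le_add_iff_left]
  by_cases hs2int : IntegrableOn s2 K μS
  · have h1 : ∫ x in K, s2 x ∂μS ≤ ∫ x in K, 2⁻¹ * F x ∂μS :=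
      MeasureTheory.setIntegral_mono_on hs2int (hFint.const_mul _) hKmeas
        fun x hx => by linarith [(hpt x hx).1]
    rw [MeasureTheory.integral_const_mul] at h1
    linarith
  · rw [MeasureTheory.integral_undef hs2int]
    have h0 : (0:ℝ) ≤ ∫ x in K, F x ∂μS :=
      MeasureTheory.setIntegral_nonneg hKmeas fun x hx => (hpt x hx).2
    linarith
end
end

section
/- For the Hopf vector field H on the unit sphere S³ ⊂ ℝ⁴, the squared norm of the covariant derivative is identically 2: for every x ∈ S³ and every orthonormal basis {e₁,e₂,e₃} of T_xS³ = x^⊥, Σ_{a=1}^{3} ‖∇_{e_a}H‖² = 2. Consequently, for every compact K ⊆ S³ the energy of H on K equals E_K(H) = (5/2)·μ(K). -/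
open MeasureTheory Matrix
open scoped RealInnerProductSpace ENNReal

noncomputable section

lemma hopf_inner (y z : E4) : ⟪Hopf y, Hopf z⟫ = ⟪y, z⟫ := by
  simp [Hopf, PiLp.inner_apply, Fin.sum_univ_four, WithLp.equiv_symm_apply, PiLp.toLp_apply]; ring

lemma hopf_skew (y z : E4) : ⟪Hopf y, z⟫ = -⟪y, Hopf z⟫ := by
  simp [Hopf, PiLp.inner_apply, Fin.sum_univ_four, WithLp.equiv_symm_apply, PiLp.toLp_apply]; ring

lemma hopf_self (x : E4) : ⟪x, Hopf x⟫ = 0 := by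
  simp [Hopf, PiLp.inner_apply, Fin.sum_univ_four, WithLp.equiv_symm_apply, PiLp.toLp_apply]; ring

lemma part1 (x : E4) (hx : x ∈ S3) (e : Fin 3 → E4) (he : TangentONB x e) :
    ∑ a : Fin 3, ‖Hopf (e a) - ⟪Hopf (e a), x⟫ • x‖ ^ 2 = 2 := by
  have hx1 : ‖x‖ = 1 := hx
  have hxx : ⟪x, x⟫ = 1 := by rw [real_inner_self_eq_norm_sq, hx1]; norm_num
  -- orthonormal family of 4 vectors
  set f : Fin 4 → E4 := Fin.cons x e with hf_def
  have hf : Orthonormal ℝ f := by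
    rw [orthonormal_iff_ite]
    intro i j
    refine Fin.cases ?_ ?_ i <;> [skip; intro a] <;> refine Fin.cases ?_ ?_ j
    · simpa [hf_def] using hxx
    · intro b
      have h0 : ⟪x, e b⟫ = 0 := by rw [real_inner_comm]; exact he.2 b
      simpa [Fin.succ_ne_zero b, (Fin.succ_ne_zero b).symm, hf_def] using h0
    · simpa [Fin.succ_ne_zero a, hf_def] using he.2 a
    · intro b
      have := orthonormal_iff_ite.mp he.1 a b
      simpa [Fin.succ_inj, hf_def] using this
  have hspan : ⊤ ≤ Submodule.span ℝ (Set.range f) := by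
    rw [hf.linearIndependent.span_eq_top_of_card_eq_finrank (by simp)]
  set b : OrthonormalBasis (Fin 4) ℝ E4 := OrthonormalBasis.mk hf hspan with hb_def
  have hb : ∀ i, b i = f i := fun i => by rw [hb_def, OrthonormalBasis.coe_mk]
  have parseval : ∑ i : Fin 4, ⟪f i, Hopf x⟫ ^ 2 = 1 := by
    have := b.sum_inner_mul_inner (Hopf x) (Hopf x)
    calc ∑ i : Fin 4, ⟪f i, Hopf x⟫ ^ 2
        = ∑ i : Fin 4, ⟪Hopf x, b i⟫ * ⟪b i, Hopf x⟫ := by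
          refine Finset.sum_congr rfl fun i _ => ?_
          rw [hb, real_inner_comm (f i) (Hopf x), sq]
      _ = ⟪Hopf x, Hopf x⟫ := this
      _ = 1 := by rw [hopf_inner, hxx]
  have hsum3 : ∑ a : Fin 3, ⟪e a, Hopf x⟫ ^ 2 = 1 := by
    rw [Fin.sum_univ_succ] at parseval
    simpa [hf_def, hopf_self x] using parseval
  have key : ∀ a : Fin 3, ‖Hopf (e a) - ⟪Hopf (e a), x⟫ • x‖ ^ 2
      = 1 - ⟪e a, Hopf x⟫ ^ 2 := by
    intro a
    have hu : ‖Hopf (e a)‖ ^ 2 = 1 := by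
      rw [← real_inner_self_eq_norm_sq, hopf_inner, real_inner_self_eq_norm_sq, he.1.1 a]
      norm_num
    have hc : ⟪Hopf (e a), x⟫ = -⟪e a, Hopf x⟫ := hopf_skew _ _
    rw [norm_sub_sq_real, hu, real_inner_smul_right, norm_smul, mul_pow,
      Real.norm_eq_abs, sq_abs, hx1, hc]
    ring
  rw [Finset.sum_congr rfl fun a _ => key a, Finset.sum_sub_distrib, hsum3]
  norm_num

lemma exists_tangentONB (x : E4) (hx : x ∈ S3) : ∃ e : Fin 3 → E4, TangentONB x e := by
  have hx1 : ‖x‖ = 1 := hx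
  have hxne : x ≠ 0 := by intro h; rw [h] at hx1; simp at hx1
  haveI : Fact (Module.finrank ℝ E4 = 3 + 1) := ⟨by simp⟩
  let b := OrthonormalBasis.fromOrthogonalSpanSingleton (𝕜 := ℝ) 3 hxne
  refine ⟨fun a => (b a : E4), ?_, fun a => ?_⟩
  · exact b.orthonormal.comp_linearIsometry ((ℝ ∙ x)ᗮ).subtypeₗᵢ
  · have hmem := (b a).2
    rw [Submodule.mem_orthogonal] at hmem
    rw [real_inner_comm]
    exact hmem x (Submodule.mem_span_singleton_self x)


/-- For the Hopf field `H` the energy integrand is identically `2`: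
`Σ_a ‖∇_{e_a}H‖² = 2` for every orthonormal tangent basis at every point of `S³` (here
`D_Y H = H(Y)` since `H` is linear). Consequently, `E_K(H) = (5/2)·μ(K)` for every compact
`K ⊆ S³`, where the energy integrand `FH` is characterized through arbitrary orthonormal
tangent bases. -/
theorem hopf_energy_integrand_and_energy :
    (∀ x ∈ S3, ∀ e : Fin 3 → E4, TangentONB x e →
      ∑ a : Fin 3, ‖Hopf (e a) - ⟪Hopf (e a), x⟫ • x‖ ^ 2 = 2) ∧
    ∀ K : Set E4, IsCompact K → K ⊆ S3 → ∀ FH : E4 → ℝ,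
      (∀ x ∈ K, ∀ e : Fin 3 → E4, TangentONB x e →
        FH x = ∑ a : Fin 3, ‖Hopf (e a) - ⟪Hopf (e a), x⟫ • x‖ ^ 2) →
      (3 / 2) * (μS K).toReal + (1 / 2) * ∫ x in K, FH x ∂μS = (5 / 2) * (μS K).toReal := by
  refine ⟨part1, ?_⟩
  intro K hK hKS FH hFH
  have hFH2 : ∀ x ∈ K, FH x = 2 := fun x hx => by
    obtain ⟨e, he⟩ := exists_tangentONB x (hKS hx)
    rw [hFH x hx e he, part1 x (hKS hx) e he]
  have hint : ∫ x in K, FH x ∂μS = 2 * (μS K).toReal := by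
    rw [setIntegral_congr_fun hK.measurableSet (fun x hx => hFH2 x hx), setIntegral_const]
    rw [smul_eq_mul, measureReal_def]; ring
  rw [hint]; ring
end
end
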